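/- Let d ≥ 1. There exists a constant C depending only on d such that for every z₀ ∈ ℝ × ℝ^d × ℝ^d, every r > 0, and every z = (t,x,v) ∈ Q_r(z₀), one has ∫_{Q_r(z₀)} 𝒢(t − t̃, x − x̃ − (t − t̃)ṽ, v − ṽ) dt̃ dx̃ dṽ ≤ C r². -/

import Mathlib

/-!
For a time lag `s > 0`, the kinetic translate `(x̃, ṽ) ↦ 𝒢(s, x − x̃ − s ṽ, v − ṽ)` is a product of a
Gaussian in `x̃` (centred at a point depending on `ṽ`) and a Gaussian in `ṽ`; their masses
`(π s³ / 3)^{d/2}` and `(4 π s)^{d/2}` exactly cancel the normalising constant, so each time slice has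
mass one, while for `s ≤ 0` the kernel vanishes. Integrating over the time interval of `Q_r(z₀)`,
of length `r²`, gives the bound with `C = 1`.
-/

open Real MeasureTheory
open scoped BigOperators ENNReal

noncomputable section

abbrev E (d : ℕ) := EuclideanSpace ℝ (Fin d)
abbrev Z (d : ℕ) := ℝ × E d × E d

variable {d : ℕ}

/-- The kinetic cylinder `Q_r(z₀)`. -/
def kCyl (r : ℝ) (z₀ : Z d) : Set (Z d) :=
  {z | z₀.1 - r ^ 2 < z.1 ∧ z.1 ≤ z₀.1 ∧
    ‖z.2.1 - z₀.2.1 - (z.1 - z₀.1) • z₀.2.2‖ < r ^ 3 ∧ ‖z.2.2 - z₀.2.2‖ < r}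

/-- The Kolmogorov Green function `𝒢`. -/
def Gker (d : ℕ) (z : Z d) : ℝ :=
  if 0 < z.1 then
    (Real.sqrt 3 / (2 * π * z.1 ^ 2)) ^ d
      * Real.exp (-(3 * ‖z.2.1 + (z.1 / 2) • z.2.2‖ ^ 2) / z.1 ^ 3)
      * Real.exp (-‖z.2.2‖ ^ 2 / (4 * z.1))
  else 0

/-- The kinetic translate `𝒢(t − t̃, x − x̃ − (t − t̃)ṽ, v − ṽ)` of the Green function. -/
def GkerKin (d : ℕ) (z w : Z d) : ℝ :=
  Gker d (z.1 - w.1, z.2.1 - w.2.1 - (z.1 - w.1) • w.2.2, z.2.2 - w.2.2)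

open Set

section Gaussian

variable {V : Type*} [NormedAddCommGroup V] [InnerProductSpace ℝ V] [FiniteDimensional ℝ V]
  [MeasurableSpace V] [BorelSpace V]

lemma lintegral_ofReal_exp_neg_mul_sq_norm_sub {b : ℝ} (hb : 0 < b) (c : V) :
    ∫⁻ v : V, ENNReal.ofReal (rexp (-b * ‖c - v‖ ^ 2))
      = ENNReal.ofReal ((π / b) ^ (Module.finrank ℝ V / 2 : ℝ)) := by
  have hval := GaussianFourier.integral_rexp_neg_mul_sq_norm (V := V) hb
  have hint : Integrable fun v : V => rexp (-b * ‖v‖ ^ 2) :=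
    Integrable.of_integral_ne_zero (by rw [hval]; positivity)
  simp_rw [norm_sub_rev c]
  rw [lintegral_sub_right_eq_self (fun v => ENNReal.ofReal (rexp (-b * ‖v‖ ^ 2))) c,
    ← ofReal_integral_eq_lintegral_ofReal hint (ae_of_all _ fun v => (exp_pos _).le), hval]

end Gaussian

@[fun_prop]
lemma measurable_Gker : Measurable (Gker d) :=
  Measurable.ite (measurableSet_lt measurable_const measurable_fst) (by fun_prop) measurable_const

lemma Gker_of_nonpos {s : ℝ} (hs : s ≤ 0) (y w : E d) : Gker d (s, y, w) = 0 :=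
  if_neg hs.not_gt

lemma Gker_of_pos {s : ℝ} (hs : 0 < s) (y w : E d) :
    Gker d (s, y, w) = (√3 / (2 * π * s ^ 2)) ^ d * rexp (-(1 / (4 * s)) * ‖w‖ ^ 2)
      * rexp (-(3 / s ^ 3) * ‖y + (s / 2) • w‖ ^ 2) := by
  rw [Gker, if_pos hs]
  ring_nf

lemma Gker_normalization {s : ℝ} (hs : 0 < s) :
    (√3 / (2 * π * s ^ 2)) ^ d
      * ((π / (3 / s ^ 3)) ^ ((d : ℝ) / 2) * (π / (1 / (4 * s))) ^ ((d : ℝ) / 2)) = 1 := by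
  have hprod : π / (3 / s ^ 3) * (π / (1 / (4 * s))) = (2 * π * s ^ 2 / √3) ^ 2 := by
    rw [div_pow, sq_sqrt zero_le_three]
    field_simp
    ring
  rw [← mul_rpow (by positivity) (by positivity), hprod,
    ← rpow_natCast_mul (by positivity : 0 ≤ 2 * π * s ^ 2 / √3),
    show ((2 : ℕ) : ℝ) * (d / 2) = d by push_cast; ring, rpow_natCast, ← mul_pow]
  field_simp
  simp

lemma lintegral_Gker_eq_one {s : ℝ} (hs : 0 < s) (x v : E d) :
    ∫⁻ p : E d × E d, ENNReal.ofReal (Gker d (s, x - p.1 - s • p.2, v - p.2)) = 1 := by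
  have hinner : ∀ w : E d, ∫⁻ y : E d, ENNReal.ofReal (Gker d (s, x - y - s • w, v - w))
      = ENNReal.ofReal ((√3 / (2 * π * s ^ 2)) ^ d * (π / (3 / s ^ 3)) ^ ((d : ℝ) / 2))
        * ENNReal.ofReal (rexp (-(1 / (4 * s)) * ‖v - w‖ ^ 2)) := by
    intro w
    have hshift : ∀ y : E d,
        x - y - s • w + (s / 2) • (v - w) = (x - s • w + (s / 2) • (v - w)) - y :=
      fun y => by abel
    simp_rw [Gker_of_pos hs, hshift, ENNReal.ofReal_mul' (exp_pos _).le]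
    rw [lintegral_const_mul' _ _ (ENNReal.mul_ne_top ENNReal.ofReal_ne_top ENNReal.ofReal_ne_top),
      lintegral_ofReal_exp_neg_mul_sq_norm_sub (by positivity), finrank_euclideanSpace_fin,
      ← ENNReal.ofReal_mul' (by positivity), ← ENNReal.ofReal_mul' (exp_pos _).le,
      ← ENNReal.ofReal_mul' (by positivity)]
    ring_nf
  rw [Measure.volume_eq_prod, lintegral_prod_symm _ (by fun_prop)]
  simp_rw [hinner]
  rw [lintegral_const_mul' _ _ ENNReal.ofReal_ne_top,
    lintegral_ofReal_exp_neg_mul_sq_norm_sub (by positivity), finrank_euclideanSpace_fin,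
    ← ENNReal.ofReal_mul (by positivity), mul_assoc, Gker_normalization hs, ENNReal.ofReal_one]

lemma lintegral_GkerKin_slice_le_one (z : Z d) (t : ℝ) :
    ∫⁻ p : E d × E d, ENNReal.ofReal (GkerKin d z (t, p)) ≤ 1 := by
  rcases lt_or_ge t z.1 with h | h
  · exact (lintegral_Gker_eq_one (sub_pos.2 h) z.2.1 z.2.2).le
  · simp [GkerKin, Gker_of_nonpos (sub_nonpos.2 h)]

theorem green_convolution_indicator_bound_general (d : ℕ) :
    ∃ C : ℝ, 0 < C ∧
      ∀ (z₀ : Z d) (r : ℝ), 0 < r → ∀ z ∈ kCyl r z₀,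
        ∫⁻ w in kCyl r z₀, ENNReal.ofReal (GkerKin d z w)
          ≤ ENNReal.ofReal (C * r ^ 2) := by
  refine ⟨1, one_pos, fun z₀ r _ z _ => ?_⟩
  have hsub : kCyl r z₀ ⊆ Ioc (z₀.1 - r ^ 2) z₀.1 ×ˢ univ :=
    fun w hw => ⟨⟨hw.1, hw.2.1⟩, trivial⟩
  calc ∫⁻ w in kCyl r z₀, ENNReal.ofReal (GkerKin d z w)
      ≤ ∫⁻ w in Ioc (z₀.1 - r ^ 2) z₀.1 ×ˢ univ, ENNReal.ofReal (GkerKin d z w) :=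
        lintegral_mono_set hsub
    _ = ∫⁻ t in Ioc (z₀.1 - r ^ 2) z₀.1, ∫⁻ p, ENNReal.ofReal (GkerKin d z (t, p)) := by
        rw [Measure.volume_eq_prod, ← Measure.prod_restrict, Measure.restrict_univ,
          lintegral_prod _ (by unfold GkerKin; fun_prop)]
    _ ≤ ∫⁻ _ in Ioc (z₀.1 - r ^ 2) z₀.1, 1 :=
        lintegral_mono fun t => lintegral_GkerKin_slice_le_one z t
    _ = ENNReal.ofReal (1 * r ^ 2) := by
        rw [setLIntegral_const, Real.volume_Ioc, one_mul, one_mul, sub_sub_cancel]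

/-- The kinetic convolution `𝒢 ⋆ 1_{Q_r(z₀)}` is `≲_d r²` on `Q_r(z₀)`:
for every `z₀`, `r > 0` and `z ∈ Q_r(z₀)`,
`∫_{Q_r(z₀)} 𝒢(t − t̃, x − x̃ − (t − t̃)ṽ, v − ṽ) dt̃ dx̃ dṽ ≤ C r²`. -/
theorem green_convolution_indicator_bound (d : ℕ) (hd : 1 ≤ d) :
    ∃ C : ℝ, 0 < C ∧
      ∀ (z₀ : Z d) (r : ℝ), 0 < r → ∀ z ∈ kCyl r z₀,
        ∫⁻ w in kCyl r z₀, ENNReal.ofReal (GkerKin d z w)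
          ≤ ENNReal.ofReal (C * r ^ 2) :=
  green_convolution_indicator_bound_general d
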